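/- arXiv:2004.03099 — 7 statements merged into one kernel-verified Lean document; each statement's English description precedes it below -/
import Mathlib

section
/- If an r-uniform hypergraph H on vertex set [n] is simultaneously G_r(tr+x, t+2)-free and G_r(2r-x-1, 2)-free for some integer 0 ≤ x ≤ r-1, then H is t-cancellative. -/
/-- An `r`-graph is `G(v,e)`-free if the union of any `e` distinct edges
contains at least `v+1` vertices. -/
def GFree {α : Type*} [DecidableEq α] (v e : ℕ) (H : Finset (Finset α)) : Prop :=
  ∀ S ⊆ H, S.card = e → v + 1 ≤ (S.sup id).card

/-- `H` is `t`-cancellative: for any `t+2` distinct edges `A 0, …, A (t-1), B, C`,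
`(⋃ i, A i) ∪ B ≠ (⋃ i, A i) ∪ C`. -/
def Cancellative {α : Type*} [DecidableEq α] (t : ℕ) (H : Finset (Finset α)) : Prop :=
  ∀ A : Fin t → Finset α, Function.Injective A → (∀ i, A i ∈ H) →
    ∀ B ∈ H, ∀ C ∈ H, B ≠ C → (∀ i, B ≠ A i) → (∀ i, C ≠ A i) →
      Finset.univ.sup A ∪ B ≠ Finset.univ.sup A ∪ C

/-- `H` is `t`-union-free. -/
def UnionFree {α : Type*} [DecidableEq α] (t : ℕ) (H : Finset (Finset α)) : Prop :=
  ∀ 𝒜 ⊆ H, ∀ ℬ ⊆ H, 1 ≤ 𝒜.card → 𝒜.card ≤ t → 1 ≤ ℬ.card → ℬ.card ≤ t →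
    𝒜 ≠ ℬ → 𝒜.sup id ≠ ℬ.sup id

/-- `H` is `t`-cover-free. -/
def CoverFree {α : Type*} [DecidableEq α] (t : ℕ) (H : Finset (Finset α)) : Prop :=
  ∀ A : Fin t → Finset α, Function.Injective A → (∀ i, A i ∈ H) →
    ∀ B ∈ H, (∀ i, B ≠ A i) → ¬ B ⊆ Finset.univ.sup A

/-- If an `r`-graph on vertex set `Fin n` is simultaneously
`G_r(tr+x, t+2)`-free and `G_r(2r-x-1, 2)`-free for some `0 ≤ x ≤ r-1`,
then it is `t`-cancellative. -/
theorem stmt_0 (n r t x : ℕ) (hx : x ≤ r - 1) (H : Finset (Finset (Fin n)))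
    (huniform : ∀ A ∈ H, A.card = r)
    (h1 : GFree (t * r + x) (t + 2) H)
    (h2 : GFree (2 * r - x - 1) 2 H) :
    Cancellative t H := by
  intro A hAinj hAH B hB C hC hBC hBA hCA heq
  set D := Finset.univ.sup A with hD
  rcases Nat.eq_zero_or_pos r with hr | hr
  · apply hBC
    have hb : B = ∅ := Finset.card_eq_zero.mp (by rw [huniform B hB, hr])
    have hc : C = ∅ := Finset.card_eq_zero.mp (by rw [huniform C hC, hr])
    rw [hb, hc]
  -- |B ∩ C| ≤ x
  have hBC2 : ({B, C} : Finset (Finset (Fin n))).card = 2 := by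
    rw [Finset.card_insert_of_notMem (by simp [hBC]), Finset.card_singleton]
  have hsub2 : ({B, C} : Finset (Finset (Fin n))) ⊆ H := by
    intro E hE
    simp only [Finset.mem_insert, Finset.mem_singleton] at hE
    rcases hE with rfl | rfl
    · exact hB
    · exact hC
  have hunion := h2 _ hsub2 hBC2
  have hsup2 : ({B, C} : Finset (Finset (Fin n))).sup id = B ∪ C := by
    simp [Finset.sup_insert]
  rw [hsup2] at hunion
  have hcards := Finset.card_union_add_card_inter B C
  have hint : (B ∩ C).card ≤ x := by
    rw [huniform B hB, huniform C hC] at hcards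
    omega
  -- |D| ≤ t * r
  have hDcard : D.card ≤ t * r := by
    have hbu : D = Finset.univ.biUnion A := by
      rw [hD, Finset.sup_eq_biUnion]
    calc D.card ≤ ∑ i, (A i).card := by rw [hbu]; exact Finset.card_biUnion_le
    _ = ∑ _i : Fin t, r := Finset.sum_congr rfl fun i _ => huniform _ (hAH i)
    _ = t * r := by simp [Finset.sum_const, mul_comm]
  -- the big family
  have hCnot : C ∉ Finset.univ.image A := by
    simp only [Finset.mem_image, Finset.mem_univ, true_and, not_exists]
    exact fun i h => hCA i h.symm
  have hBnot : B ∉ insert C (Finset.univ.image A) := by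
    simp only [Finset.mem_insert, Finset.mem_image, Finset.mem_univ, true_and, not_or,
      not_exists]
    exact ⟨hBC, fun i h => hBA i h.symm⟩
  have hScard : (insert B (insert C (Finset.univ.image A))).card = t + 2 := by
    rw [Finset.card_insert_of_notMem hBnot, Finset.card_insert_of_notMem hCnot,
      Finset.card_image_of_injective _ hAinj, Finset.card_univ, Fintype.card_fin]
  have hSsub : insert B (insert C (Finset.univ.image A)) ⊆ H := by
    intro E hE
    simp only [Finset.mem_insert, Finset.mem_image, Finset.mem_univ, true_and] at hE
    rcases hE with rfl | rfl | ⟨i, rfl⟩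
    · exact hB
    · exact hC
    · exact hAH i
  have hmem : ∀ a, a ∈ D ∨ a ∈ B ↔ a ∈ D ∨ a ∈ C := by
    intro a
    have := Finset.ext_iff.mp heq a
    simpa [Finset.mem_union] using this
  have hSsup : (insert B (insert C (Finset.univ.image A))).sup id = D ∪ B := by
    rw [Finset.sup_insert, Finset.sup_insert, Finset.sup_image, Function.id_comp]
    simp only [id_eq, Finset.sup_eq_union]
    ext a
    simp only [Finset.mem_union]
    constructor
    · rintro (h | h | h)
      · exact Or.inr h
      · exact (hmem a).mpr (Or.inr h)
      · exact Or.inl h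
    · rintro (h | h)
      · exact Or.inr (Or.inr h)
      · exact Or.inl h
  have h1' := h1 _ hSsub hScard
  rw [hSsup] at h1'
  have hsdiff : B \ D ⊆ B ∩ C := by
    intro a ha
    simp only [Finset.mem_sdiff] at ha
    have h2 : a ∈ D ∨ a ∈ C := (hmem a).mp (Or.inr ha.1)
    simp only [Finset.mem_inter]
    exact ⟨ha.1, h2.resolve_left ha.2⟩
  have hDB : (D ∪ B).card ≤ D.card + (B ∩ C).card := by
    calc (D ∪ B).card = (D ∪ (B \ D)).card := by rw [Finset.union_sdiff_self_eq_union]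
    _ ≤ D.card + (B \ D).card := Finset.card_union_le _ _
    _ ≤ D.card + (B ∩ C).card := by
        exact Nat.add_le_add_left (Finset.card_le_card hsdiff) _
  omega
end

section
/- If a (2k+1)-uniform hypergraph H is G_{2k+1}(4k+2, 3)-free, then H is 2-cancellative. -/
/-- If a `(2k+1)`-graph is `G_{2k+1}(4k+2, 3)`-free, then it is 2-cancellative. -/
theorem stmt_1 {α : Type*} [DecidableEq α] (k : ℕ) (H : Finset (Finset α))
    (huniform : ∀ A ∈ H, A.card = 2 * k + 1)
    (h : GFree (4 * k + 2) 3 H) :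
    Cancellative 2 H := by
  intro A hinj hA B hB C hC hBC hBA hCA heq
  have hU : Finset.univ.sup A = A 0 ∪ A 1 := by
    have huniv : (Finset.univ : Finset (Fin 2)) = {0, 1} := by decide
    rw [huniv, Finset.sup_insert, Finset.sup_singleton]
    rfl
  rw [hU] at heq
  set A0 := A 0 with hA0def
  set A1 := A 1 with hA1def
  set U := A0 ∪ A1 with hUdef
  have hDC : C \ U = B \ U := by
    ext a
    have h1 : a ∈ U ∪ B ↔ a ∈ U ∪ C := by rw [heq]
    simp only [Finset.mem_union, Finset.mem_sdiff] at *
    tauto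
  have hA01 : A0 ≠ A1 := fun hh => absurd (hinj hh) (by decide)
  have hcardA0 := huniform A0 (hA 0)
  have hcardA1 := huniform A1 (hA 1)
  have hcardB := huniform B hB
  have hcardC := huniform C hC
  have triple : ∀ X ∈ H, ∀ Y ∈ H, ∀ Z ∈ H, X ≠ Y → X ≠ Z → Y ≠ Z →
      4 * k + 3 ≤ (X ∪ Y ∪ Z).card := by
    intro X hX Y hY Z hZ hXY hXZ hYZ
    have hsub : ({X, Y, Z} : Finset (Finset α)) ⊆ H := by
      intro s hs
      simp only [Finset.mem_insert, Finset.mem_singleton] at hs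
      rcases hs with h' | h' | h' <;> subst h' <;> assumption
    have hcard : ({X, Y, Z} : Finset (Finset α)).card = 3 := by
      rw [Finset.card_insert_of_notMem (by simp [hXY, hXZ]),
        Finset.card_insert_of_notMem (by simp [hYZ]), Finset.card_singleton]
    have hle := h _ hsub hcard
    have hsup : ({X, Y, Z} : Finset (Finset α)).sup id = X ∪ Y ∪ Z := by
      simp [Finset.sup_insert, Finset.union_assoc]
    rw [hsup] at hle
    omega
  have bound : ∀ X W : Finset α, U = X ∪ W → X.card = 2 * k + 1 →
      4 * k + 3 ≤ (X ∪ B ∪ C).card →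
      2 * k + 2 ≤ ((B ∪ C) ∩ (W \ X)).card + (B \ U).card := by
    intro X W hXW hXcard hge
    have hsub : X ∪ B ∪ C ⊆ X ∪ ((B ∪ C) ∩ (W \ X)) ∪ (B \ U) := by
      intro a ha
      by_cases haX : a ∈ X
      · simp only [Finset.mem_union]; tauto
      have haBC : a ∈ B ∨ a ∈ C := by
        simp only [Finset.mem_union] at ha; tauto
      by_cases haU : a ∈ U
      · have haW : a ∈ W := by
          rw [hXW] at haU
          rcases Finset.mem_union.mp haU with h' | h'
          · exact absurd h' haX
          · exact h'
        have : a ∈ (B ∪ C) ∩ (W \ X) := by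
          simp only [Finset.mem_inter, Finset.mem_union, Finset.mem_sdiff]; tauto
        simp only [Finset.mem_union]; tauto
      · have : a ∈ B \ U := by
          rcases haBC with h' | h'
          · exact Finset.mem_sdiff.mpr ⟨h', haU⟩
          · rw [← hDC]; exact Finset.mem_sdiff.mpr ⟨h', haU⟩
        simp only [Finset.mem_union]; tauto
    have h1 := le_trans hge (Finset.card_le_card hsub)
    have h2 := Finset.card_union_le (X ∪ ((B ∪ C) ∩ (W \ X))) (B \ U)
    have h3 := Finset.card_union_le X ((B ∪ C) ∩ (W \ X))
    omega
  have t1 : 4 * k + 3 ≤ (A0 ∪ B ∪ C).card :=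
    triple A0 (hA 0) B hB C hC (Ne.symm (hBA 0)) (Ne.symm (hCA 0)) hBC
  have t2 : 4 * k + 3 ≤ (A1 ∪ B ∪ C).card :=
    triple A1 (hA 1) B hB C hC (Ne.symm (hBA 1)) (Ne.symm (hCA 1)) hBC
  have b1 := bound A0 A1 rfl hcardA0 t1
  have b2 := bound A1 A0 (Finset.union_comm A0 A1) hcardA1 t2
  have hb := Finset.card_inter_add_card_sdiff B U
  have hc := Finset.card_inter_add_card_sdiff C U
  have hcd : (C \ U).card = (B \ U).card := by rw [hDC]
  have hxy : ((B ∪ C) ∩ (A1 \ A0)).card + ((B ∪ C) ∩ (A0 \ A1)).card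
      ≤ (B ∩ U).card + (C ∩ U).card := by
    have hdisj : Disjoint ((B ∪ C) ∩ (A1 \ A0)) ((B ∪ C) ∩ (A0 \ A1)) := by
      rw [Finset.disjoint_left]
      intro a h1 h2
      simp only [Finset.mem_inter, Finset.mem_sdiff] at h1 h2
      tauto
    calc ((B ∪ C) ∩ (A1 \ A0)).card + ((B ∪ C) ∩ (A0 \ A1)).card
        = (((B ∪ C) ∩ (A1 \ A0)) ∪ ((B ∪ C) ∩ (A0 \ A1))).card :=
          (Finset.card_union_of_disjoint hdisj).symm
      _ ≤ ((B ∩ U) ∪ (C ∩ U)).card := by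
          apply Finset.card_le_card
          intro a ha
          simp only [Finset.mem_union, Finset.mem_inter, Finset.mem_sdiff, hUdef] at *
          tauto
      _ ≤ (B ∩ U).card + (C ∩ U).card := Finset.card_union_le _ _
  omega
end

section
/- If an r-uniform hypergraph H with at least t edges is G_r(tr-r, t)-free, then H is G_r(sr-r, s)-free for every integer 1 ≤ s ≤ t. -/
/-- If an `r`-graph with at least `t` edges is `G_r(tr-r, t)`-free, then it is
`G_r(sr-r, s)`-free for every `1 ≤ s ≤ t`. -/
theorem stmt_3 {α : Type*} [DecidableEq α] (r t : ℕ) (H : Finset (Finset α))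
    (huniform : ∀ A ∈ H, A.card = r) (hcard : t ≤ H.card)
    (h : GFree (t * r - r) t H) :
    ∀ s, 1 ≤ s → s ≤ t → GFree (s * r - r) s H := by
  intro s hs1 hst S hSH hScard
  obtain ⟨T, hST, hTH, hTcard⟩ := Finset.exists_subsuperset_card_eq hSH (hScard ▸ hst) hcard
  have key := h T hTH hTcard
  have hsup : T.sup id = S.sup id ∪ (T \ S).sup id := by
    conv_lhs => rw [← Finset.union_sdiff_of_subset hST]
    rw [Finset.sup_union]
    rfl
  have hbound : ((T \ S).sup id).card ≤ (t - s) * r := by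
    rw [Finset.sup_eq_biUnion]
    calc ((T \ S).biUnion id).card ≤ ∑ A ∈ T \ S, (id A).card := Finset.card_biUnion_le
    _ = ∑ A ∈ T \ S, r := by
        refine Finset.sum_congr rfl fun A hA => huniform A (hTH (Finset.mem_sdiff.mp hA).1)
    _ = (t - s) * r := by
        rw [Finset.sum_const, Finset.card_sdiff_of_subset hST, hTcard, hScard, smul_eq_mul]
  have hchain : t * r - r + 1 ≤ (S.sup id).card + (t - s) * r := by
    calc t * r - r + 1 ≤ (T.sup id).card := key
    _ ≤ (S.sup id).card + ((T \ S).sup id).card := by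
        rw [hsup]; exact Finset.card_union_le _ _
    _ ≤ _ := by omega
  have h1 : (t - s) * r = t * r - s * r := Nat.sub_mul t s r
  have h2 : r ≤ s * r := Nat.le_mul_of_pos_left r hs1
  have h3 : s * r ≤ t * r := Nat.mul_le_mul_right r hst
  omega
end

section
/- For positive integers t, k and n, every 2t-cancellative (t+1)k-uniform hypergraph on n vertices has at most 2·C(n,k) + 2t + 1 edges. -/
open Finset

theorem Finset.exists_mem_ne_ne_of_two_lt_card {β : Type*} [DecidableEq β] {s : Finset β}
    (hs : 2 < s.card) (a b : β) : ∃ x ∈ s, x ≠ a ∧ x ≠ b := by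
  obtain ⟨x, hx⟩ : ((s.erase a).erase b).Nonempty := by
    rw [← card_pos]
    have := pred_card_le_card_erase (s := s) (a := a)
    have := pred_card_le_card_erase (s := s.erase a) (a := b)
    omega
  obtain ⟨hxb, hxa, hxs⟩ := by simpa only [mem_erase] using hx
  exact ⟨x, hxs, hxa, hxb⟩

theorem Finset.union_eq_union_of_sdiff_subset {α : Type*} [DecidableEq α] {S X B : Finset α}
    (hXB : X ⊆ B) (hB : B \ X ⊆ S) : S ∪ B = S ∪ X := by
  rw [← union_sdiff_of_subset hXB, union_comm X, ← union_assoc, union_eq_left.mpr hB]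

section Covering

variable {α : Type*} [DecidableEq α]

def coveredSets (k : ℕ) (G : Finset (Finset α)) : Finset (Finset α) :=
  G.biUnion (powersetCard k)

theorem mem_coveredSets {k : ℕ} {G : Finset (Finset α)} {X : Finset α} :
    X ∈ coveredSets k G ↔ X.card = k ∧ ∃ A ∈ G, X ⊆ A := by
  simp only [coveredSets, mem_biUnion, mem_powersetCard]
  tauto

theorem coveredSets_mono {k : ℕ} {G G' : Finset (Finset α)} (h : G ⊆ G') :
    coveredSets k G ⊆ coveredSets k G' :=
  biUnion_subset_biUnion_of_subset_left _ h

theorem card_coveredSets_le_choose [Fintype α] (k : ℕ) (G : Finset (Finset α)) :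
    (coveredSets k G).card ≤ (Fintype.card α).choose k := by
  rw [← card_univ, ← card_powersetCard]
  exact card_le_card fun X hX =>
    mem_powersetCard.mpr ⟨subset_univ X, (mem_coveredSets.mp hX).1⟩

theorem card_le_mul_card_coveredSets {k c : ℕ} (H : Finset (Finset α))
    (hdeg : ∀ G ⊆ H, G.Nonempty → ∃ X ∈ coveredSets k G, (G.filter (X ⊆ ·)).card ≤ c) :
    H.card ≤ c * (coveredSets k H).card := by
  induction H using Finset.strongInduction with
  | H G ih =>
    rcases G.eq_empty_or_nonempty with rfl | hG
    · simp
    obtain ⟨X, hX, hXdeg⟩ := hdeg G Subset.rfl hG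
    obtain ⟨-, A, hAG, hXA⟩ := mem_coveredSets.mp hX
    set G' := G.filter (¬ X ⊆ ·)
    have hG'G : G' ⊂ G := (ssubset_iff_of_subset (filter_subset _ _)).mpr
      ⟨A, hAG, fun hA => (mem_filter.mp hA).2 hXA⟩
    have hG' : G'.card ≤ c * (coveredSets k G').card :=
      ih G' hG'G fun F hF => hdeg F (hF.trans hG'G.subset)
    have hcov : coveredSets k G' ⊆ (coveredSets k G).erase X := fun Y hY =>
      mem_erase.mpr ⟨fun hYX => by
          obtain ⟨-, B, hB, hYB⟩ := mem_coveredSets.mp hY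
          exact (mem_filter.mp hB).2 (hYX ▸ hYB),
        coveredSets_mono hG'G.subset hY⟩
    have hcard := card_le_card hcov
    rw [card_erase_of_mem hX] at hcard
    have hpos : 0 < (coveredSets k G).card := card_pos.mpr ⟨X, hX⟩
    calc G.card = (G.filter (X ⊆ ·)).card + G'.card :=
          (card_filter_add_card_filter_not _).symm
      _ ≤ c + c * ((coveredSets k G).card - 1) := add_le_add hXdeg (hG'.trans (by gcongr))
      _ = c * (coveredSets k G).card := by
          rw [Nat.mul_sub_one, ← Nat.add_sub_assoc (Nat.le_mul_of_pos_right c hpos)]; omega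

theorem exists_subset_card_le_of_card_eq_mul {k : ℕ} (F : Finset (Finset α)) :
    ∀ (t : ℕ) (W : Finset α), W.card = t * k →
      (∀ X ⊆ W, X.card = k → ∃ E ∈ F, X ⊆ E) →
      ∃ D ⊆ F, D.card ≤ t ∧ W ⊆ D.sup id
  | 0, W, hW, _ => ⟨∅, empty_subset _, le_rfl, by simp_all⟩
  | t + 1, W, hW, hcov => by
    obtain ⟨X, hXW, hX⟩ := exists_subset_card_eq (s := W) (n := k)
      (hW ▸ Nat.le_mul_of_pos_left k t.succ_pos)
    obtain ⟨E, hEF, hXE⟩ := hcov X hXW hX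
    obtain ⟨D, hDF, hD, hWD⟩ := exists_subset_card_le_of_card_eq_mul F t (W \ X)
      (by rw [card_sdiff_of_subset hXW, hW, hX, Nat.succ_mul, Nat.add_sub_cancel])
      fun Y hY => hcov Y (hY.trans sdiff_subset)
    refine ⟨insert E D, insert_subset hEF hDF, (card_insert_le _ _).trans (by omega), ?_⟩
    rw [sup_insert, id]
    intro x hx
    by_cases hxX : x ∈ X
    · exact mem_union_left _ (hXE hxX)
    · exact mem_union_right _ (hWD (mem_sdiff.mpr ⟨hx, hxX⟩))

end Covering

namespace Cancellative

variable {α : Type*} [DecidableEq α] {m : ℕ} {H : Finset (Finset α)}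

theorem sup_union_ne_of_card_eq (h : Cancellative m H) {u : Finset (Finset α)} (huH : u ⊆ H)
    (hu : u.card = m) {B C : Finset α} (hB : B ∈ H) (hC : C ∈ H) (hBC : B ≠ C)
    (hBu : B ∉ u) (hCu : C ∉ u) : u.sup id ∪ B ≠ u.sup id ∪ C := by
  let e := u.equivFinOfCardEq hu
  let A : Fin m → Finset α := fun i => e.symm i
  have hA : univ.sup A = u.sup id := by
    calc univ.sup A = (univ.map e.symm.toEmbedding).sup Subtype.val := by rw [sup_map]; rfl
      _ = u.attach.sup Subtype.val := by rw [map_univ_equiv, attach_eq_univ]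
      _ = u.sup id := sup_attach u id
  rw [← hA]
  exact h A (fun i j hij => e.symm.injective (Subtype.ext hij)) (fun i => huH (e.symm i).2)
    B hB C hC hBC (fun i hBi => hBu (hBi ▸ (e.symm i).2))
    (fun i hCi => hCu (hCi ▸ (e.symm i).2))

theorem sup_union_ne_of_card_le (h : Cancellative m H) (hH : m + 2 ≤ H.card)
    {D : Finset (Finset α)} (hDH : D ⊆ H) (hD : D.card ≤ m) {B C : Finset α} (hB : B ∈ H)
    (hC : C ∈ H) (hBC : B ≠ C) (hBD : B ∉ D) (hCD : C ∉ D) : D.sup id ∪ B ≠ D.sup id ∪ C := by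
  have hDH' : D ⊆ (H.erase B).erase C := fun E hE =>
    mem_erase.mpr ⟨fun hEC => hCD (hEC ▸ hE),
      mem_erase.mpr ⟨fun hEB => hBD (hEB ▸ hE), hDH hE⟩⟩
  have hcard : m ≤ ((H.erase B).erase C).card := by
    rw [card_erase_of_mem (mem_erase.mpr ⟨hBC.symm, hC⟩), card_erase_of_mem hB]
    omega
  obtain ⟨u, hDu, huH, hu⟩ := exists_subsuperset_card_eq hDH' hD hcard
  have hsup : D.sup id ⊆ u.sup id := sup_mono hDu
  intro heq
  refine h.sup_union_ne_of_card_eq (huH.trans ((erase_subset _ _).trans (erase_subset _ _))) hu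
    hB hC hBC (fun hBu => ?_) (fun hCu => ?_) ?_
  · exact (mem_erase.mp (mem_erase.mp (huH hBu)).2).1 rfl
  · exact (mem_erase.mp (huH hCu)).1 rfl
  · rw [← union_eq_left.mpr hsup, union_assoc, heq, ← union_assoc]

theorem exists_mem_coveredSets_card_filter_le_two {t k : ℕ} {G : Finset (Finset α)}
    (h : Cancellative (2 * t) H) (hH : 2 * t + 2 ≤ H.card)
    (huniform : ∀ A ∈ H, A.card = (t + 1) * k) (hGH : G ⊆ H) (hG : G.Nonempty) :
    ∃ X ∈ coveredSets k G, (G.filter (X ⊆ ·)).card ≤ 2 := by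
  by_contra! hdeg
  obtain ⟨B, hBG⟩ := hG
  have hcardB := huniform B (hGH hBG)
  obtain ⟨X, hXB, hX⟩ := exists_subset_card_eq (s := B) (n := k)
    (hcardB ▸ Nat.le_mul_of_pos_left k t.succ_pos)
  obtain ⟨C, hC, hCB, -⟩ := exists_mem_ne_ne_of_two_lt_card
    (hdeg X (mem_coveredSets.mpr ⟨hX, B, hBG, hXB⟩)) B B
  obtain ⟨hCG, hXC⟩ := mem_filter.mp hC
  set F := (G.erase B).erase C
  have hcovF : ∀ A ∈ G, ∀ Y ⊆ A, Y.card = k → ∃ E ∈ F, Y ⊆ E := fun A hA Y hYA hY => by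
    obtain ⟨E, hE, hEB, hEC⟩ := exists_mem_ne_ne_of_two_lt_card
      (hdeg Y (mem_coveredSets.mpr ⟨hY, A, hA, hYA⟩)) B C
    obtain ⟨hEG, hYE⟩ := mem_filter.mp hE
    exact ⟨E, mem_erase.mpr ⟨hEC, mem_erase.mpr ⟨hEB, hEG⟩⟩, hYE⟩
  have hcard_sdiff : ∀ A ∈ H, X ⊆ A → (A \ X).card = t * k := fun A hA hXA => by
    rw [card_sdiff_of_subset hXA, huniform A hA, hX, Nat.succ_mul, Nat.add_sub_cancel]
  obtain ⟨D₁, hD₁F, hD₁, hBD₁⟩ := exists_subset_card_le_of_card_eq_mul F t (B \ X)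
    (hcard_sdiff B (hGH hBG) hXB) fun Y hY => hcovF B hBG Y (hY.trans sdiff_subset)
  obtain ⟨D₂, hD₂F, hD₂, hCD₂⟩ := exists_subset_card_le_of_card_eq_mul F t (C \ X)
    (hcard_sdiff C (hGH hCG) hXC) fun Y hY => hcovF C hCG Y (hY.trans sdiff_subset)
  have hDF : D₁ ∪ D₂ ⊆ F := union_subset hD₁F hD₂F
  have hFH : F ⊆ H := ((erase_subset _ _).trans (erase_subset _ _)).trans hGH
  refine h.sup_union_ne_of_card_le hH (hDF.trans hFH) ((card_union_le _ _).trans (by omega))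
    (hGH hBG) (hGH hCG) hCB.symm (fun hB => ?_) (fun hC => ?_) ?_
  · exact (mem_erase.mp (mem_erase.mp (hDF hB)).2).1 rfl
  · exact (mem_erase.mp (hDF hC)).1 rfl
  · rw [union_eq_union_of_sdiff_subset hXB (hBD₁.trans (sup_mono subset_union_left)),
      union_eq_union_of_sdiff_subset hXC (hCD₂.trans (sup_mono subset_union_right))]

end Cancellative

theorem stmt_7_general (n t k : ℕ)
    (H : Finset (Finset (Fin n)))
    (huniform : ∀ A ∈ H, A.card = (t + 1) * k)
    (h : Cancellative (2 * t) H) :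
    H.card ≤ 2 * n.choose k + 2 * t + 1 := by
  by_cases hH : 2 * t + 2 ≤ H.card
  · have hcov : H.card ≤ 2 * (coveredSets k H).card :=
      card_le_mul_card_coveredSets H fun _ hGH hG =>
        h.exists_mem_coveredSets_card_filter_le_two hH huniform hGH hG
    have hchoose := card_coveredSets_le_choose k H
    rw [Fintype.card_fin] at hchoose
    omega
  · omega

/-- Every `2t`-cancellative `(t+1)k`-uniform hypergraph on `n` vertices has at
most `2·C(n,k) + 2t + 1` edges. -/
theorem stmt_7 (n t k : ℕ) (ht : 1 ≤ t) (hk : 1 ≤ k) (hn : 1 ≤ n)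
    (H : Finset (Finset (Fin n)))
    (huniform : ∀ A ∈ H, A.card = (t + 1) * k)
    (h : Cancellative (2 * t) H) :
    H.card ≤ 2 * n.choose k + 2 * t + 1 :=
  stmt_7_general n t k H huniform h
end

section
/- Let H be an r-partite r-uniform hypergraph that is G_r(sr-r, s)-free for all 1 ≤ s ≤ t. If A, B ⊆ H are distinct subfamilies with 1 ≤ |A|, |B| ≤ t and ∪_{A∈A} A = ∪_{B∈B} B, then |A| = |B| = t. -/
/-- If an `r`-partite `r`-graph is `G_r(sr-r, s)`-free for all `1 ≤ s ≤ t`, and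
`𝒜 ≠ ℬ` are subfamilies of size between 1 and `t` with equal unions, then
`|𝒜| = |ℬ| = t`. -/
theorem stmt_12 {α : Type*} [DecidableEq α] [Fintype α] (r t : ℕ)
    (H : Finset (Finset α)) (huniform : ∀ A ∈ H, A.card = r)
    (V : Fin r → Finset α)
    (hdisj : ∀ i j, i ≠ j → Disjoint (V i) (V j))
    (hcover : Finset.univ.sup V = Finset.univ)
    (hpartite : ∀ A ∈ H, ∀ i, (A ∩ V i).card = 1)
    (h : ∀ s, 1 ≤ s → s ≤ t → GFree (s * r - r) s H) :
    ∀ 𝒜 ⊆ H, ∀ ℬ ⊆ H, 1 ≤ 𝒜.card → 𝒜.card ≤ t → 1 ≤ ℬ.card → ℬ.card ≤ t →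
      𝒜 ≠ ℬ → 𝒜.sup id = ℬ.sup id → 𝒜.card = t ∧ ℬ.card = t := by
  intro 𝒜 h𝒜 ℬ hℬ h𝒜1 h𝒜t hℬ1 hℬt hne hsup
  have step : ∀ 𝒳 ⊆ H, 𝒳.card ≤ t → ∀ B ∈ H, B ∉ 𝒳 → B ⊆ 𝒳.sup id → 𝒳.card = t := by
    intro 𝒳 h𝒳 h𝒳t B hBH hB𝒳 hBsub
    by_contra hlt
    have hle : 𝒳.card + 1 ≤ t := by omega
    have hcard : (insert B 𝒳).card = 𝒳.card + 1 := Finset.card_insert_of_notMem hB𝒳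
    have hsub : insert B 𝒳 ⊆ H := Finset.insert_subset hBH h𝒳
    have hg := h (𝒳.card + 1) (by omega) hle (insert B 𝒳) hsub hcard
    have hsupeq : (insert B 𝒳).sup id = 𝒳.sup id := by
      rw [Finset.sup_insert]
      simpa using Finset.union_eq_right.mpr hBsub
    have hbound : (𝒳.sup id).card ≤ 𝒳.card * r := by
      calc (𝒳.sup id).card ≤ ∑ A ∈ 𝒳, (id A).card := by
            rw [Finset.sup_eq_biUnion]; exact Finset.card_biUnion_le
        _ = ∑ A ∈ 𝒳, r := Finset.sum_congr rfl (fun A hA => huniform A (h𝒳 hA))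
        _ = 𝒳.card * r := by rw [Finset.sum_const, smul_eq_mul]
    have hs : (𝒳.card + 1) * r - r = 𝒳.card * r := by
      rw [add_mul, one_mul, Nat.add_sub_cancel]
    rw [hsupeq, hs] at hg
    omega
  by_cases hBA : ∃ B ∈ ℬ, B ∉ 𝒜
  · obtain ⟨B, hBℬ, hB𝒜⟩ := hBA
    have hBsub : B ⊆ 𝒜.sup id := by
      rw [hsup]; exact Finset.le_sup (f := id) hBℬ
    have h𝒜eq : 𝒜.card = t := step 𝒜 h𝒜 h𝒜t B (hℬ hBℬ) hB𝒜 hBsub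
    have hAB : ∃ A ∈ 𝒜, A ∉ ℬ := by
      by_contra hc
      push_neg at hc
      exact hne (Finset.eq_of_subset_of_card_le hc (by omega))
    obtain ⟨A, hA𝒜, hAℬ⟩ := hAB
    have hAsub : A ⊆ ℬ.sup id := by
      rw [← hsup]; exact Finset.le_sup (f := id) hA𝒜
    exact ⟨h𝒜eq, step ℬ hℬ hℬt A (h𝒜 hA𝒜) hAℬ hAsub⟩
  · push_neg at hBA
    have hAB : ∃ A ∈ 𝒜, A ∉ ℬ := by
      by_contra hc
      push_neg at hc
      exact hne (Finset.Subset.antisymm hc hBA)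
    obtain ⟨A, hA𝒜, hAℬ⟩ := hAB
    have hAsub : A ⊆ ℬ.sup id := by
      rw [← hsup]; exact Finset.le_sup (f := id) hA𝒜
    have hℬeq : ℬ.card = t := step ℬ hℬ hℬt A (h𝒜 hA𝒜) hAℬ hAsub
    exact absurd (Finset.eq_of_subset_of_card_le hBA (by omega)).symm hne
end

section
/- For fixed integers r ≥ 3, t ≥ 3 and n → ∞, the maximum number of edges C_t(n,r) of a t-cancellative r-uniform hypergraph on n vertices satisfies C_t(n,r) = O(n^{⌈r/(⌊t/2⌋+1)⌉}). -/
lemma cancellative_set {α : Type*} [DecidableEq α] {t : ℕ} {H : Finset (Finset α)}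
    (hc : Cancellative t H) {T : Finset (Finset α)} (hTH : T ⊆ H) (hTcard : T.card = t)
    {B C : Finset α} (hB : B ∈ H) (hC : C ∈ H) (hBC : B ≠ C) (hBT : B ∉ T) (hCT : C ∉ T) :
    T.sup id ∪ B ≠ T.sup id ∪ C := by
  have e : Fin t ≃ {x // x ∈ T} := (T.equivFin.trans (finCongr hTcard)).symm
  set A : Fin t → Finset α := fun i => (e i : Finset α) with hA
  have hinj : Function.Injective A := fun i j h => e.injective (Subtype.ext h)
  have hmem : ∀ i, A i ∈ T := fun i => (e i).2
  have hsup : Finset.univ.sup A = T.sup id := by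
    apply le_antisymm
    · exact Finset.sup_le fun i _ => Finset.le_sup (f := id) (hmem i)
    · refine Finset.sup_le fun x hx => ?_
      have h1 : A (e.symm ⟨x, hx⟩) = x := by simp [hA]
      exact h1 ▸ Finset.le_sup (f := A) (Finset.mem_univ _)
  rw [← hsup]
  exact hc A hinj (fun i => hTH (hmem i)) B hB C hC hBC
    (fun i h => hBT (h ▸ hmem i)) (fun i h => hCT (h ▸ hmem i))

lemma cover_lemma {n : ℕ} {H : Finset (Finset (Fin n))} {B : Finset (Fin n)}
    {d : ℕ} (hd : 1 ≤ d) (hdB : d ≤ B.card)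
    (closed : ∀ D ⊆ B, D.card = d → ∃ A ∈ H, A ≠ B ∧ D ⊆ A) :
    ∀ m : ℕ, ∀ X ⊆ B, X.card ≤ d * m →
      ∃ S ⊆ H, S.card ≤ m ∧ X ⊆ S.sup id ∧ ∀ A ∈ S, A ≠ B ∧ (A ∩ X).Nonempty := by
  intro m
  induction m with
  | zero =>
    intro X hXB hX
    have : X = ∅ := Finset.card_eq_zero.mp (by omega)
    subst this
    exact ⟨∅, Finset.empty_subset _, le_rfl, Finset.empty_subset _, fun A hA => absurd hA (Finset.notMem_empty _)⟩
  | succ m ih =>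
    intro X hXB hX
    by_cases hXe : X = ∅
    · subst hXe
      exact ⟨∅, Finset.empty_subset _, by simp, Finset.empty_subset _, fun A hA => absurd hA (Finset.notMem_empty _)⟩
    · obtain ⟨E, hEX, hEcard⟩ := Finset.exists_subset_card_eq (min_le_right d X.card)
      obtain ⟨D, hED, hDB, hDcard⟩ :=
        Finset.exists_subsuperset_card_eq (hEX.trans hXB) (by rw [hEcard]; exact min_le_left _ _) hdB
      obtain ⟨A, hAH, hAB, hDA⟩ := closed D hDB hDcard
      have hEA : E ⊆ A := hED.trans hDA
      have hX'B : X \ A ⊆ B := (Finset.sdiff_subset).trans hXB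
      have hX'card : (X \ A).card ≤ d * m := by
        have h1 : X \ A ⊆ X \ E := Finset.sdiff_subset_sdiff (le_refl X) hEA
        have h2 : (X \ E).card = X.card - E.card := Finset.card_sdiff_of_subset hEX
        have h3 := Finset.card_le_card h1
        have h4 : d * (m + 1) = d * m + d := by ring
        rw [h4] at hX
        omega
      obtain ⟨S', hS'H, hS'card, hS'sup, hS'mem⟩ := ih (X \ A) hX'B hX'card
      refine ⟨insert A S', Finset.insert_subset hAH hS'H, ?_, ?_, ?_⟩
      · have := Finset.card_insert_le A S'
        omega
      · intro x hx
        by_cases hxA : x ∈ A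
        · exact Finset.mem_sup.mpr ⟨A, Finset.mem_insert_self _ _, hxA⟩
        · have : x ∈ X \ A := Finset.mem_sdiff.mpr ⟨hx, hxA⟩
          exact Finset.le_iff_subset.mp (Finset.sup_mono (Finset.subset_insert A S')) (hS'sup this)
      · intro A' hA'
        rcases Finset.mem_insert.mp hA' with h | h
        · subst h
          refine ⟨hAB, ?_⟩
          have hEne : E.Nonempty := by
            rw [← Finset.card_pos, hEcard]
            have : 0 < X.card := Finset.card_pos.mpr (Finset.nonempty_of_ne_empty hXe)
            omega
          obtain ⟨x, hx⟩ := hEne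
          exact ⟨x, Finset.mem_inter.mpr ⟨hEA hx, hEX hx⟩⟩
        · obtain ⟨h1, x, hx⟩ := hS'mem A' h
          rw [Finset.mem_inter] at hx
          exact ⟨h1, x, Finset.mem_inter.mpr ⟨hx.1, (Finset.mem_sdiff.mp hx.2).1⟩⟩

lemma no_shared {n r t k d : ℕ} {H : Finset (Finset (Fin n))}
    (hcard : ∀ A ∈ H, A.card = r)
    (hc : Cancellative t H) (hH : t + 2 ≤ H.card)
    (hd : 1 ≤ d) (hdr : d ≤ r) (hrdk : r ≤ d * (k + 1)) (hkt : 2 * k ≤ t)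
    {B C : Finset (Fin n)} (hB : B ∈ H) (hC : C ∈ H) (hBC : B ≠ C)
    (clB : ∀ D ⊆ B, D.card = d → ∃ A ∈ H, A ≠ B ∧ D ⊆ A)
    (clC : ∀ D ⊆ C, D.card = d → ∃ A ∈ H, A ≠ C ∧ D ⊆ A)
    {D : Finset (Fin n)} (hDB : D ⊆ B) (hDC : D ⊆ C) (hDd : D.card = d) : False := by
  classical
  have hBr : B.card = r := hcard B hB
  have hCr : C.card = r := hcard C hC
  have hdBC : d ≤ (B ∩ C).card := hDd ▸ Finset.card_le_card (Finset.subset_inter hDB hDC)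
  have hrk : r ≤ d * k + d := by
    calc r ≤ d * (k + 1) := hrdk
    _ = d * k + d := by ring
  have hsub_le : r - d ≤ d * k := Nat.sub_le_iff_le_add.mpr hrk
  -- bound on |B \ C|
  have hX1 : (B \ C).card ≤ d * k := by
    have h1 := Finset.card_sdiff_add_card_inter B C
    have h2 : (B \ C).card ≤ r - d := by omega
    exact le_trans h2 hsub_le
  have hX2 : (C \ B).card ≤ d * k := by
    have h1 := Finset.card_sdiff_add_card_inter C B
    have hdCB : d ≤ (C ∩ B).card := by rwa [Finset.inter_comm]
    have h2 : (C \ B).card ≤ r - d := by omega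
    exact le_trans h2 hsub_le
  obtain ⟨S₁, hS₁H, hS₁c, hS₁sup, hS₁mem⟩ :=
    cover_lemma hd (hBr ▸ hdr) clB k (B \ C) Finset.sdiff_subset hX1
  obtain ⟨S₂, hS₂H, hS₂c, hS₂sup, hS₂mem⟩ :=
    cover_lemma hd (hCr ▸ hdr) clC k (C \ B) Finset.sdiff_subset hX2
  set S := S₁ ∪ S₂ with hS
  have hSH : S ⊆ H := Finset.union_subset hS₁H hS₂H
  have hScard : S.card ≤ t := by
    rw [hS]
    have := Finset.card_union_le S₁ S₂
    omega
  have hBS : B ∉ S := by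
    intro h
    rcases Finset.mem_union.mp h with h | h
    · exact (hS₁mem B h).1 rfl
    · obtain ⟨x, hx⟩ := (hS₂mem B h).2
      rw [Finset.mem_inter, Finset.mem_sdiff] at hx
      exact hx.2.2 hx.1
  have hCS : C ∉ S := by
    intro h
    rcases Finset.mem_union.mp h with h | h
    · obtain ⟨x, hx⟩ := (hS₁mem C h).2
      rw [Finset.mem_inter, Finset.mem_sdiff] at hx
      exact hx.2.2 hx.1
    · exact (hS₂mem C h).1 rfl
  have hsubS : S ⊆ H \ {B, C} := by
    intro x hx
    rw [Finset.mem_sdiff, Finset.mem_insert, Finset.mem_singleton]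
    refine ⟨hSH hx, ?_⟩
    rintro (rfl | rfl)
    · exact hBS hx
    · exact hCS hx
  have hHBC : t ≤ (H \ {B, C}).card := by
    have hsub2 : ({B, C} : Finset (Finset (Fin n))) ⊆ H := by
      intro x hx
      rw [Finset.mem_insert, Finset.mem_singleton] at hx
      rcases hx with rfl | rfl
      exacts [hB, hC]
    rw [Finset.card_sdiff_of_subset hsub2, Finset.card_pair hBC]
    omega
  obtain ⟨T, hST, hTsub, hTcard⟩ := Finset.exists_subsuperset_card_eq hsubS hScard hHBC
  have hTH : T ⊆ H := hTsub.trans Finset.sdiff_subset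
  have hBT : B ∉ T := by
    intro h
    have := hTsub h
    rw [Finset.mem_sdiff, Finset.mem_insert] at this
    exact this.2 (Or.inl rfl)
  have hCT : C ∉ T := by
    intro h
    have := hTsub h
    rw [Finset.mem_sdiff, Finset.mem_insert, Finset.mem_singleton] at this
    exact this.2 (Or.inr rfl)
  have hsupmono : S.sup id ⊆ T.sup id := Finset.le_iff_subset.mp (Finset.sup_mono hST)
  have hBCsub : B \ C ⊆ T.sup id :=
    (hS₁sup.trans (Finset.le_iff_subset.mp (Finset.sup_mono Finset.subset_union_left))).trans hsupmono
  have hCBsub : C \ B ⊆ T.sup id :=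
    (hS₂sup.trans (Finset.le_iff_subset.mp (Finset.sup_mono Finset.subset_union_right))).trans hsupmono
  apply cancellative_set hc hTH hTcard hB hC hBC hBT hCT
  ext x
  simp only [Finset.mem_union]
  constructor
  · rintro (h | h)
    · exact Or.inl h
    · by_cases hx : x ∈ C
      · exact Or.inr hx
      · exact Or.inl (hBCsub (Finset.mem_sdiff.mpr ⟨h, hx⟩))
  · rintro (h | h)
    · exact Or.inl h
    · by_cases hx : x ∈ B
      · exact Or.inr hx
      · exact Or.inl (hCBsub (Finset.mem_sdiff.mpr ⟨h, hx⟩))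

lemma count_lemma {n r t k d : ℕ} {H : Finset (Finset (Fin n))}
    (hcard : ∀ A ∈ H, A.card = r)
    (hc : Cancellative t H) (hH : t + 2 ≤ H.card)
    (hd : 1 ≤ d) (hdr : d ≤ r) (hrdk : r ≤ d * (k + 1)) (hkt : 2 * k ≤ t) :
    H.card ≤ Nat.choose n d := by
  classical
  set f : Finset (Fin n) → Finset (Fin n) := fun B =>
    if h1 : ∃ D, D ⊆ B ∧ D.card = d ∧ ∀ A ∈ H, A ≠ B → ¬ D ⊆ A then h1.choose
    else if h2 : ∃ D, D ⊆ B ∧ D.card = d then h2.choose else ∅ with hf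
  have hfspec : ∀ B ∈ H, f B ⊆ B ∧ (f B).card = d := by
    intro B hB
    have h2 : ∃ D, D ⊆ B ∧ D.card = d := by
      obtain ⟨D, h⟩ := Finset.exists_subset_card_eq (show d ≤ B.card by rw [hcard B hB]; exact hdr)
      exact ⟨D, h⟩
    rw [hf]
    by_cases h1 : ∃ D, D ⊆ B ∧ D.card = d ∧ ∀ A ∈ H, A ≠ B → ¬ D ⊆ A
    · simp only [dif_pos h1]
      exact ⟨h1.choose_spec.1, h1.choose_spec.2.1⟩
    · simp only [dif_neg h1, dif_pos h2]
      exact ⟨h2.choose_spec.1, h2.choose_spec.2⟩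
  have hmaps : ∀ B ∈ H, f B ∈ Finset.powersetCard d (Finset.univ : Finset (Fin n)) := by
    intro B hB
    rw [Finset.mem_powersetCard]
    exact ⟨Finset.subset_univ _, (hfspec B hB).2⟩
  have hinj : Set.InjOn f H := by
    intro B hB C hC hfeq
    by_contra hne
    -- case analysis on openness
    by_cases h1B : ∃ D, D ⊆ B ∧ D.card = d ∧ ∀ A ∈ H, A ≠ B → ¬ D ⊆ A
    · have : f B = h1B.choose := by rw [hf]; simp only [dif_pos h1B]
      have hpriv := h1B.choose_spec.2.2
      have hsubC : f B ⊆ C := hfeq ▸ (hfspec C hC).1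
      exact hpriv C hC (fun h => hne h.symm) (this ▸ hsubC)
    · by_cases h1C : ∃ D, D ⊆ C ∧ D.card = d ∧ ∀ A ∈ H, A ≠ C → ¬ D ⊆ A
      · have : f C = h1C.choose := by rw [hf]; simp only [dif_pos h1C]
        have hpriv := h1C.choose_spec.2.2
        have hsubB : f C ⊆ B := hfeq ▸ (hfspec B hB).1
        exact hpriv B hB hne (this ▸ hsubB)
      · push_neg at h1B h1C
        have clB : ∀ D ⊆ B, D.card = d → ∃ A ∈ H, A ≠ B ∧ D ⊆ A := by
          intro D hDB hDd
          obtain ⟨A, hA1, hA2, hA3⟩ := h1B D hDB hDd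
          exact ⟨A, hA1, hA2, hA3⟩
        have clC : ∀ D ⊆ C, D.card = d → ∃ A ∈ H, A ≠ C ∧ D ⊆ A := by
          intro D hDC hDd
          obtain ⟨A, hA1, hA2, hA3⟩ := h1C D hDC hDd
          exact ⟨A, hA1, hA2, hA3⟩
        exact no_shared hcard hc hH hd hdr hrdk hkt hB hC hne clB clC
          (hfspec B hB).1 (hfeq ▸ (hfspec C hC).1) (hfspec B hB).2
  calc H.card ≤ (Finset.powersetCard d (Finset.univ : Finset (Fin n))).card :=
        Finset.card_le_card_of_injOn f hmaps hinj
    _ = Nat.choose n d := by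
        rw [Finset.card_powersetCard, Finset.card_univ, Fintype.card_fin]


/-- For fixed `r ≥ 3`, `t ≥ 3`, the maximum size of a `t`-cancellative
`r`-graph on `n` vertices is `O(n ^ ⌈r/(⌊t/2⌋+1)⌉)`.  Here
`⌈r/(⌊t/2⌋+1)⌉ = (r + t/2) / (t/2 + 1)` with natural division. -/
theorem stmt_14 (r t : ℕ) (hr : 3 ≤ r) (ht : 3 ≤ t) :
    ∃ c : ℝ, 0 < c ∧ ∀ n : ℕ, ∀ H : Finset (Finset (Fin n)),
      (∀ A ∈ H, A.card = r) → Cancellative t H →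
        (H.card : ℝ) ≤ c * (n : ℝ) ^ ((r + t / 2) / (t / 2 + 1)) := by
  classical
  refine ⟨(t : ℝ) + 3, by positivity, ?_⟩
  intro n H hcard hc
  obtain ⟨k, hk⟩ : ∃ k, t / 2 = k := ⟨_, rfl⟩
  obtain ⟨d, hdeq⟩ : ∃ d, (r + t / 2) / (t / 2 + 1) = d := ⟨_, rfl⟩
  rw [hk] at hdeq
  rw [hk, hdeq]
  have hkpos : 0 < k + 1 := Nat.succ_pos _
  have hk1 : 1 ≤ k := by omega
  -- arithmetic facts about d
  have h3 := Nat.div_add_mod (r + k) (k + 1)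
  rw [hdeq] at h3
  obtain ⟨m, hm⟩ : ∃ m, (r + k) % (k + 1) = m := ⟨_, rfl⟩
  rw [hm] at h3
  have h4 : m < k + 1 := hm ▸ Nat.mod_lt _ hkpos
  obtain ⟨e, he⟩ : ∃ e, (k + 1) * d = e := ⟨_, rfl⟩
  rw [he] at h3
  have hd : 1 ≤ d := by
    rcases Nat.eq_zero_or_pos d with h | h
    · subst h
      simp at he
      omega
    · exact h
  have hdr : d ≤ r := by
    rw [← hdeq]
    have h1 : r + k ≤ r * (k + 1) := by
      have h2 : k ≤ r * k := Nat.le_mul_of_pos_left k (by omega)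
      calc r + k ≤ r + r * k := Nat.add_le_add_left h2 r
        _ = r * (k + 1) := by ring
    calc (r + k) / (k + 1) ≤ r * (k + 1) / (k + 1) := Nat.div_le_div_right h1
      _ = r := Nat.mul_div_cancel r hkpos
  have hrdk : r ≤ d * (k + 1) := by
    rw [mul_comm, he]
    omega
  have hkt : 2 * k ≤ t := by omega
  -- now the counting
  by_cases hbig : t + 2 ≤ H.card
  · have hcount := count_lemma hcard hc hbig hd hdr hrdk hkt
    have hpow : Nat.choose n d ≤ n ^ d := Nat.choose_le_pow n d
    have : (H.card : ℝ) ≤ ((n : ℝ)) ^ d := by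
      calc (H.card : ℝ) ≤ ((n ^ d : ℕ) : ℝ) := by exact_mod_cast le_trans hcount hpow
        _ = (n : ℝ) ^ d := by push_cast; ring
    calc (H.card : ℝ) ≤ (n : ℝ) ^ d := this
      _ ≤ ((t : ℝ) + 3) * (n : ℝ) ^ d := by nlinarith [pow_nonneg (by positivity : (0:ℝ) ≤ (n:ℝ)) d, ht]
  · push_neg at hbig
    by_cases hemp : H = ∅
    · subst hemp
      simp
      positivity
    · obtain ⟨A, hA⟩ := Finset.nonempty_of_ne_empty hemp
      have hAcard : A.card = r := hcard A hA
      have hAne : A.Nonempty := by rw [← Finset.card_pos, hAcard]; omega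
      obtain ⟨x, _⟩ := hAne
      have hn1 : 1 ≤ n := x.pos
      have hn1' : (1 : ℝ) ≤ (n : ℝ) := by exact_mod_cast hn1
      have hpow1 : (1 : ℝ) ≤ (n : ℝ) ^ d := one_le_pow₀ hn1'
      have hHt : (H.card : ℝ) ≤ (t : ℝ) + 1 := by exact_mod_cast Nat.le_of_lt_succ (by omega)
      calc (H.card : ℝ) ≤ (t : ℝ) + 1 := hHt
        _ ≤ ((t : ℝ) + 3) * 1 := by linarith
        _ ≤ ((t : ℝ) + 3) * (n : ℝ) ^ d := by
            apply mul_le_mul_of_nonneg_left hpow1 (by positivity)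
end

section
/- For a t-cancellative r-uniform hypergraph on n vertices with r not divisible by t+1: writing r = (t+1)(k-1)+y with 1 ≤ y ≤ t, one has C_{2t}(n,r) ≤ C_{2t}(n+t+1-y, (t+1)k), i.e., the maximum size of a 2t-cancellative r-graph on n vertices is at most the maximum size of a 2t-cancellative (t+1)k-graph on n+t+1-y vertices. -/
/-- Padding: if `r = (t+1)(k-1) + y` with `1 ≤ y ≤ t`, then every
`2t`-cancellative `r`-graph on `n` vertices gives rise to a `2t`-cancellative
`(t+1)k`-graph on `n + t + 1 - y` vertices of at least the same size,
i.e. `C_{2t}(n,r) ≤ C_{2t}(n+t+1-y, (t+1)k)`. -/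
theorem stmt_15 (n t k y : ℕ) (ht : 1 ≤ t) (hk : 1 ≤ k)
    (hy1 : 1 ≤ y) (hy2 : y ≤ t) (r : ℕ) (hr : r = (t + 1) * (k - 1) + y)
    (H : Finset (Finset (Fin n)))
    (huniform : ∀ A ∈ H, A.card = r)
    (h : Cancellative (2 * t) H) :
    ∃ H' : Finset (Finset (Fin (n + t + 1 - y))),
      (∀ A ∈ H', A.card = (t + 1) * k) ∧
      Cancellative (2 * t) H' ∧ H.card ≤ H'.card := by
  unfold Cancellative at h ⊢
  have hle : n ≤ n + t + 1 - y := by omega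
  set e : Fin n ↪ Fin (n + t + 1 - y) := Fin.castLEEmb hle with he
  set P : Finset (Fin (n + t + 1 - y)) := Finset.univ \ Finset.univ.map e with hP
  have hPcard : P.card = t + 1 - y := by
    rw [hP, Finset.card_sdiff_of_subset (Finset.subset_univ _)]
    simp only [Finset.card_map, Finset.card_univ, Fintype.card_fin]
    omega
  have hdisj : ∀ A : Finset (Fin n), Disjoint (A.map e) P := fun A =>
    Finset.disjoint_sdiff.mono_left (Finset.map_subset_map.mpr (Finset.subset_univ A))
  set f : Finset (Fin n) → Finset (Fin (n + t + 1 - y)) := fun A => A.map e ∪ P with hf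
  have hcancel : ∀ A : Finset (Fin n), (f A) \ P = A.map e := fun A =>
    Finset.union_sdiff_cancel_right (hdisj A)
  have hfinj : Function.Injective f := by
    intro A B hAB
    have h1 : A.map e = B.map e := by rw [← hcancel A, ← hcancel B, hAB]
    exact Finset.map_injective e h1
  have hne : Nonempty (Fin (2 * t)) := ⟨⟨0, by omega⟩⟩
  have hsupf : ∀ A₀ : Fin (2*t) → Finset (Fin n),
      Finset.univ.sup (fun i => f (A₀ i)) = (Finset.univ.sup A₀).map e ∪ P := by
    intro A₀
    have h1 : (Finset.univ.sup A₀).map e = Finset.univ.sup (fun i => (A₀ i).map e) :=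
      Finset.comp_sup_eq_sup_comp (Finset.map e) (fun x y => Finset.map_union x y)
        (Finset.map_empty e)
    have h2 : Finset.univ.sup ((fun i => (A₀ i).map e) ⊔ (fun _ => P))
        = Finset.univ.sup (fun i => (A₀ i).map e) ⊔ Finset.univ.sup (fun _ : Fin (2*t) => P) :=
      Finset.sup_sup
    rw [h1]
    have h3 : (fun i => f (A₀ i)) = ((fun i => (A₀ i).map e) ⊔ fun _ => P) := rfl
    rw [h3, h2, Finset.sup_const Finset.univ_nonempty]
    rfl
  have hfu : ∀ S T : Finset (Fin n), f S ∪ f T = (S ∪ T).map e ∪ P := by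
    intro S T
    rw [hf]
    simp only [Finset.map_union]
    ac_rfl
  refine ⟨H.image f, ?_, ?_, ?_⟩
  · intro A hA
    obtain ⟨A₀, hA₀, rfl⟩ := Finset.mem_image.mp hA
    rw [hf]
    rw [Finset.card_union_of_disjoint (hdisj A₀), Finset.card_map, huniform A₀ hA₀, hPcard]
    have : k - 1 + 1 = k := by omega
    have h2 : (t+1)*(k-1) + (t+1) = (t+1)*k := by
      rw [← this, Nat.mul_add, Nat.mul_one, this]
    omega
  · intro A hAinj hAmem B hB C hC hBC hBA hCA hEq
    have hex : ∀ i, ∃ a ∈ H, f a = A i := fun i => Finset.mem_image.mp (hAmem i)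
    choose A₀ hA₀mem hA₀eq using hex
    obtain ⟨B₀, hB₀mem, hB₀eq⟩ := Finset.mem_image.mp hB
    obtain ⟨C₀, hC₀mem, hC₀eq⟩ := Finset.mem_image.mp hC
    have hA₀inj : Function.Injective A₀ := fun i j hij => hAinj (by rw [← hA₀eq, ← hA₀eq, hij])
    have hsA : Finset.univ.sup A = (Finset.univ.sup A₀).map e ∪ P := by
      rw [← hsupf A₀]; exact Finset.sup_congr rfl (fun i _ => (hA₀eq i).symm)
    have eB : Finset.univ.sup A ∪ B = (Finset.univ.sup A₀ ∪ B₀).map e ∪ P := by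
      rw [hsA, ← hB₀eq]
      simp only [hf, Finset.map_union]
      ac_rfl
    have eC : Finset.univ.sup A ∪ C = (Finset.univ.sup A₀ ∪ C₀).map e ∪ P := by
      rw [hsA, ← hC₀eq]
      simp only [hf, Finset.map_union]
      ac_rfl
    have key : (Finset.univ.sup A₀ ∪ B₀).map e ∪ P = (Finset.univ.sup A₀ ∪ C₀).map e ∪ P := by
      rw [← eB, ← eC]; exact hEq
    have key2 : Finset.univ.sup A₀ ∪ B₀ = Finset.univ.sup A₀ ∪ C₀ := by
      apply Finset.map_injective e
      have := congrArg (· \ P) key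
      simpa [Finset.union_sdiff_cancel_right (hdisj _)] using this
    exact h A₀ hA₀inj hA₀mem B₀ hB₀mem C₀ hC₀mem
      (fun hbc => hBC (by rw [← hB₀eq, ← hC₀eq, hbc]))
      (fun i hb => hBA i (by rw [← hB₀eq, ← hA₀eq, hb]))
      (fun i hc => hCA i (by rw [← hC₀eq, ← hA₀eq, hc])) key2
  · rw [Finset.card_image_of_injective _ hfinj]
end
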